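/- Define, on the superalgebra 𝒪(n,n; t̲) = 𝒪(n; t̲) ⊗ Λ(n), the odd linear operator T_H(a) = Σ_{i=1}^{2n} (−1)^{p(∂_i)p(a)} ∂_i(a) ∂_{i'}, where i' = i + n for i ≤ n and i' = i − n for n+1 ≤ i ≤ 2n. Then for all homogeneous a, b ∈ 𝒪(n,n; t̲): [T_H(a), T_H(b)] = T_H(T_H(a)(b)), where the bracket is the supercommutator of superderivations. -/

import Mathlib

open scoped Classical
noncomputable section

/-- The sign `(-1)^a` for a parity `a : ZMod 2`. -/
def sgn (F : Type*) [Ring F] (a : ZMod 2) : F := if a = 0 then 1 else -1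

/-- Index of a monomial `x^(α) x^u` of `𝒪(n, n'; t̲)`: a divided power exponent
`α : Fin n → ℕ` for the even variables and a subset `u` of the `n'` odd
variables. -/
abbrev SIdx (n n' : ℕ) : Type := (Fin n → ℕ) × Finset (Fin n')

/-- The superalgebra `𝒪(n, n'; t̲)` (divided powers ⊗ exterior algebra), as the
free module on the monomials (monomials with an exponent out of range multiply
to zero automatically in characteristic `p`). -/
abbrev SAlg (F : Type*) [Field F] (n n' : ℕ) : Type _ := SIdx n n' →₀ F

variable {F : Type*} [Field F] {n n' : ℕ}

/-- The Koszul sign produced when multiplying `x^u · x^v`. -/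
def mulSign (F : Type*) [Field F] {n' : ℕ} (u v : Finset (Fin n')) : F :=
  (-1 : F) ^ ((u ×ˢ v).filter fun q => q.2 < q.1).card

/-- Product of two monomials: `x^(α)x^u · x^(β)x^v = ± C(α+β, α) x^(α+β) x^{u∪v}`
if `u ∩ v = ∅`, and `0` otherwise. -/
def sMulB (q r : SIdx n n') : SAlg F n n' :=
  if Disjoint q.2 r.2 then
    (mulSign F q.2 r.2 * ∏ i, ((q.1 i + r.1 i).choose (q.1 i) : F)) •
      Finsupp.single (fun i => q.1 i + r.1 i, q.2 ∪ r.2) (1 : F)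
  else 0

/-- The (super-commutative) multiplication of `𝒪(n, n'; t̲)`. -/
def sMul (f g : SAlg F n n') : SAlg F n n' :=
  f.sum fun q c => g.sum fun r d => (c * d) • sMulB q r

/-- The even partial derivative `∂_i`, `i ∈ {1, …, n}`: `∂_i(x^(α)) = x^(α-ε_i)`. -/
def De (i : Fin n) (f : SAlg F n n') : SAlg F n n' :=
  f.sum fun q c =>
    if 0 < q.1 i then Finsupp.single (Function.update q.1 i (q.1 i - 1), q.2) c
    else 0

/-- The odd partial derivative `∂_j` with respect to the `j`-th odd variable. -/
def Do (j : Fin n') (f : SAlg F n n') : SAlg F n n' :=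
  f.sum fun q c =>
    if j ∈ q.2 then
      ((-1 : F) ^ (q.2.filter fun k => k < j).card * c) •
        Finsupp.single (q.1, q.2.erase j) (1 : F)
    else 0

/-- `f` is ℤ₂-homogeneous of parity `c`. -/
def IsHomog (c : ZMod 2) (f : SAlg F n n') : Prop :=
  ∀ q ∈ f.support, ((q.2.card : ZMod 2) = c)

/-- All exponents appearing in `f` are bounded by `π_i = p^{t_i} - 1`, i.e. `f`
lies in the truncated algebra `𝒪(n, n'; t̲)`. -/
def Bounded (p : ℕ) (t : Fin n → ℕ) (f : SAlg F n n') : Prop :=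
  ∀ q ∈ f.support, ∀ i, Prod.fst q i ≤ p ^ t i - 1

/-- `T_H(a)`, for `a` homogeneous of parity `pa`, as an operator on
`𝒪(n, n; t̲)`:  `T_H(a) = Σ_{i=1}^{2n} (-1)^{p(∂_i) p(a)} ∂_i(a) ∂_{i'}`. -/
def TH (pa : ZMod 2) (a b : SAlg F n n) : SAlg F n n :=
  (∑ i : Fin n, sMul (De i a) (Do i b)) +
    sgn F pa • ∑ i : Fin n, sMul (Do i a) (De i b)

/-!
Monomials multiply as `x^(α) x^u · x^(β) x^v = wedgeCoeff u v * dpCoeff α β • x^(α+β) x^(u ∪ v)`,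
and the commutation and associativity laws of these two coefficients make `𝒪(n, n)` an
associative supercommutative algebra on which the `∂_i` act as pairwise supercommuting
superderivations.
Indexing all `2n` derivatives together, `T_H(a) = Σ_k ± ∂_k(a) ∂_{k'}`, so by the Leibniz rule
`T_H(a) T_H(b) x` splits into a part where `x` is differentiated once and a part where it is
differentiated twice. The second-order parts cancel in the supercommutator since the `∂`'s
supercommute, and the two first-order parts are, after reindexing, the two halves of
`T_H(T_H(a)(b)) x` in which `∂_k` falls on `∂_l a`, respectively on `∂_{l'} b`.
-/

@[simp] lemma sgn_zero : sgn F 0 = 1 := rfl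

@[simp] lemma sgn_one : sgn F 1 = -1 := by simp [sgn]

lemma sgn_add (x y : ZMod 2) : sgn F (x + y) = sgn F x * sgn F y := by
  have cases : ∀ a : ZMod 2, a = 0 ∨ a = 1 := by decide
  rcases cases x with rfl | rfl <;> rcases cases y with rfl | rfl <;>
    simp [sgn, show (1 + 1 : ZMod 2) = 0 from rfl]

lemma sgn_add_one (x : ZMod 2) : sgn F (x + 1) = -sgn F x := by
  rw [sgn_add, sgn_one, mul_neg_one]

lemma sgn_natCast (k : ℕ) : sgn F (k : ZMod 2) = (-1 : F) ^ k := by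
  induction k with
  | zero => simp
  | succ m ih => rw [Nat.cast_succ, sgn_add_one, ih, pow_succ, mul_neg_one]

lemma single_eq_smul_single_one (q : SIdx n n') (c : F) :
    Finsupp.single q c = c • Finsupp.single q (1 : F) := by
  rw [Finsupp.smul_single, smul_eq_mul, mul_one]

section Linearity

lemma De_single (i : Fin n) (q : SIdx n n') (c : F) :
    De i (Finsupp.single q c) =
      if 0 < q.1 i then Finsupp.single (Function.update q.1 i (q.1 i - 1), q.2) c else 0 :=
  Finsupp.sum_single_index (by split <;> simp)

lemma De_add (i : Fin n) (f g : SAlg F n n') : De i (f + g) = De i f + De i g :=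
  Finsupp.sum_add_index' (fun _ => by split <;> simp)
    (fun _ _ _ => by split <;> simp [Finsupp.single_add])

lemma De_smul (i : Fin n) (c : F) (f : SAlg F n n') : De i (c • f) = c • De i f := by
  rw [De, Finsupp.sum_smul_index' (fun _ => by split <;> simp), De, Finsupp.smul_sum]
  exact Finsupp.sum_congr fun _ _ => by split <;> simp [Finsupp.smul_single]

lemma De_sum {κ : Type*} (i : Fin n) (s : Finset κ) (f : κ → SAlg F n n') :
    De i (∑ j ∈ s, f j) = ∑ j ∈ s, De i (f j) :=
  map_sum (AddMonoidHom.mk' (De i) (De_add i) : SAlg F n n' →+ SAlg F n n') f s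

@[simp] lemma De_zero (i : Fin n) : De i (0 : SAlg F n n') = 0 :=
  map_zero (AddMonoidHom.mk' (De i) (De_add i) : SAlg F n n' →+ SAlg F n n')

lemma Do_add (j : Fin n') (f g : SAlg F n n') : Do j (f + g) = Do j f + Do j g :=
  Finsupp.sum_add_index' (fun _ => by split <;> simp)
    (fun _ _ _ => by split <;> simp [mul_add, add_smul])

lemma Do_smul (j : Fin n') (c : F) (f : SAlg F n n') : Do j (c • f) = c • Do j f := by
  rw [Do, Finsupp.sum_smul_index' (fun _ => by split <;> simp), Do, Finsupp.smul_sum]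
  exact Finsupp.sum_congr fun _ _ => by
    split <;> simp only [smul_eq_mul, smul_smul, mul_left_comm, smul_zero]

lemma Do_sum {κ : Type*} (j : Fin n') (s : Finset κ) (f : κ → SAlg F n n') :
    Do j (∑ k ∈ s, f k) = ∑ k ∈ s, Do j (f k) :=
  map_sum (AddMonoidHom.mk' (Do j) (Do_add j) : SAlg F n n' →+ SAlg F n n') f s

@[simp] lemma Do_zero (j : Fin n') : Do j (0 : SAlg F n n') = 0 :=
  map_zero (AddMonoidHom.mk' (Do j) (Do_add j) : SAlg F n n' →+ SAlg F n n')

lemma sMul_single_single (q r : SIdx n n') (c d : F) :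
    sMul (Finsupp.single q c) (Finsupp.single r d) = (c * d) • sMulB q r := by
  rw [sMul, Finsupp.sum_single_index (by simp), Finsupp.sum_single_index (by simp)]

lemma add_sMul (f g h : SAlg F n n') : sMul (f + g) h = sMul f h + sMul g h :=
  Finsupp.sum_add_index' (fun _ => by simp)
    (fun _ _ _ => by rw [← Finsupp.sum_add]; simp [add_mul, add_smul])

lemma sMul_add (f g h : SAlg F n n') : sMul f (g + h) = sMul f g + sMul f h := by
  rw [sMul, sMul, sMul, ← Finsupp.sum_add]
  exact Finsupp.sum_congr fun _ _ =>
    Finsupp.sum_add_index' (fun _ => by simp) (fun _ _ _ => by simp [mul_add, add_smul])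

lemma smul_sMul (c : F) (f g : SAlg F n n') : sMul (c • f) g = c • sMul f g := by
  rw [sMul, Finsupp.sum_smul_index' (fun _ => by simp), sMul, Finsupp.smul_sum]
  exact Finsupp.sum_congr fun _ _ => by rw [Finsupp.smul_sum]; simp [smul_smul, mul_assoc]

lemma sMul_smul (c : F) (f g : SAlg F n n') : sMul f (c • g) = c • sMul f g := by
  rw [sMul, sMul, Finsupp.smul_sum]
  refine Finsupp.sum_congr fun _ _ => ?_
  rw [Finsupp.sum_smul_index' (fun _ => by simp), Finsupp.smul_sum]
  simp [smul_smul, mul_left_comm]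

lemma sum_sMul {κ : Type*} (s : Finset κ) (g : κ → SAlg F n n') (f : SAlg F n n') :
    sMul (∑ j ∈ s, g j) f = ∑ j ∈ s, sMul (g j) f :=
  map_sum (AddMonoidHom.mk' (sMul · f) (add_sMul · · f) : SAlg F n n' →+ SAlg F n n') g s

lemma sMul_sum {κ : Type*} (f : SAlg F n n') (s : Finset κ) (g : κ → SAlg F n n') :
    sMul f (∑ j ∈ s, g j) = ∑ j ∈ s, sMul f (g j) :=
  map_sum (AddMonoidHom.mk' (sMul f) (sMul_add f) : SAlg F n n' →+ SAlg F n n') g s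

@[simp] lemma zero_sMul (g : SAlg F n n') : sMul 0 g = 0 :=
  map_zero (AddMonoidHom.mk' (sMul · g) (add_sMul · · g) : SAlg F n n' →+ SAlg F n n')

@[simp] lemma sMul_zero (f : SAlg F n n') : sMul f 0 = 0 :=
  map_zero (AddMonoidHom.mk' (sMul f) (sMul_add f) : SAlg F n n' →+ SAlg F n n')

end Linearity

section Coefficients

variable (F)

def wedgeCoeff (u v : Finset (Fin n')) : F := if Disjoint u v then mulSign F u v else 0

def contractCoeff (j : Fin n') (w : Finset (Fin n')) : F :=
  if j ∈ w then (-1) ^ (w.filter (· < j)).card else 0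

def dpCoeff (α β : Fin n → ℕ) : F := ∏ i, ((α i + β i).choose (α i) : F)

variable {F}

lemma neg_one_pow_mul_self (m : ℕ) : (-1 : F) ^ m * (-1) ^ m = 1 := by
  rw [← pow_add]; exact Even.neg_one_pow ⟨m, rfl⟩

lemma mulSign_union_left {u v w : Finset (Fin n')} (h : Disjoint u v) :
    mulSign F (u ∪ v) w = mulSign F u w * mulSign F v w := by
  rw [mulSign, mulSign, mulSign, ← pow_add, Finset.union_product, Finset.filter_union,
    Finset.card_union_of_disjoint
      (Finset.disjoint_filter_filter (Finset.disjoint_product.2 (Or.inl h)))]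

lemma mulSign_union_right {u v w : Finset (Fin n')} (h : Disjoint v w) :
    mulSign F u (v ∪ w) = mulSign F u v * mulSign F u w := by
  rw [mulSign, mulSign, mulSign, ← pow_add, Finset.product_union, Finset.filter_union,
    Finset.card_union_of_disjoint
      (Finset.disjoint_filter_filter (Finset.disjoint_product.2 (Or.inr h)))]

lemma mulSign_comm {u v : Finset (Fin n')} (h : Disjoint u v) :
    mulSign F u v = (-1) ^ (u.card * v.card) * mulSign F v u := by
  set A := ((u ×ˢ v).filter fun q => q.2 < q.1).card
  set B := ((u ×ˢ v).filter fun q => ¬ q.2 < q.1).card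
  have hswap : ((v ×ˢ u).filter fun q => q.2 < q.1).card = B := by
    refine Finset.card_equiv (Equiv.prodComm _ _) fun q => ?_
    have hne : q.1 ∈ v → q.2 ∈ u → q.2 ≠ q.1 := fun h1 h2 e =>
      Finset.disjoint_left.1 h h2 (e ▸ h1)
    simp only [Finset.mem_filter, Finset.mem_product, Equiv.prodComm_apply, Prod.fst_swap,
      Prod.snd_swap, not_lt]
    constructor
    · rintro ⟨⟨h1, h2⟩, hlt⟩; exact ⟨⟨h2, h1⟩, hlt.le⟩
    · rintro ⟨⟨h2, h1⟩, hle⟩; exact ⟨⟨h1, h2⟩, lt_of_le_of_ne hle (hne h1 h2)⟩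
  have hAB : A + B = u.card * v.card := by
    rw [Finset.card_filter_add_card_filter_not, Finset.card_product]
  rw [mulSign, mulSign, hswap, ← hAB, pow_add, mul_assoc, neg_one_pow_mul_self, mul_one]

lemma mulSign_erase_left {u : Finset (Fin n')} {j : Fin n'} (hj : j ∈ u)
    (v : Finset (Fin n')) :
    mulSign F u v = (-1) ^ (v.filter (· < j)).card * mulSign F (u.erase j) v := by
  conv_lhs => rw [← Finset.insert_erase hj, Finset.insert_eq]
  rw [mulSign_union_left (Finset.disjoint_singleton_left.2 (Finset.notMem_erase j u)), mulSign,
    Finset.singleton_product, Finset.filter_map, Finset.card_map]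
  rfl

lemma mulSign_erase_right {v : Finset (Fin n')} {j : Fin n'} (hj : j ∈ v)
    (u : Finset (Fin n')) :
    mulSign F u v = (-1) ^ (u.filter (j < ·)).card * mulSign F u (v.erase j) := by
  conv_lhs => rw [← Finset.insert_erase hj, Finset.insert_eq]
  rw [mulSign_union_right (Finset.disjoint_singleton_left.2 (Finset.notMem_erase j v)), mulSign,
    Finset.product_singleton, Finset.filter_map, Finset.card_map]
  rfl

lemma card_filter_lt_add_card_filter_gt {u : Finset (Fin n')} {j : Fin n'} (hj : j ∉ u) :
    (u.filter (· < j)).card + (u.filter (j < ·)).card = u.card := by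
  have hgt : u.filter (j < ·) = u.filter fun k => ¬ k < j := by
    refine Finset.filter_congr fun k hk => ⟨fun h => h.asymm, fun h => ?_⟩
    exact (not_lt.1 h).lt_of_ne fun e => hj (e ▸ hk)
  rw [hgt, Finset.card_filter_add_card_filter_not]

lemma filter_erase_lt_self (w : Finset (Fin n')) (j : Fin n') :
    (w.erase j).filter (· < j) = w.filter (· < j) := by
  rw [Finset.filter_erase, Finset.erase_eq_of_notMem (by simp)]

lemma wedgeCoeff_comm (u v : Finset (Fin n')) :
    wedgeCoeff F u v = (-1) ^ (u.card * v.card) * wedgeCoeff F v u := by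
  by_cases h : Disjoint u v
  · rw [wedgeCoeff, wedgeCoeff, if_pos h, if_pos h.symm, mulSign_comm h]
  · rw [wedgeCoeff, wedgeCoeff, if_neg h, if_neg fun h' => h h'.symm, mul_zero]

lemma wedgeCoeff_assoc (u v w : Finset (Fin n')) :
    wedgeCoeff F u v * wedgeCoeff F (u ∪ v) w = wedgeCoeff F v w * wedgeCoeff F u (v ∪ w) := by
  simp only [wedgeCoeff, Finset.disjoint_union_left, Finset.disjoint_union_right]
  by_cases huv : Disjoint u v <;> by_cases huw : Disjoint u w <;> by_cases hvw : Disjoint v w <;>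
    simp only [huv, huw, hvw, if_true, if_false, and_true, and_false, mul_zero, zero_mul]
  rw [mulSign_union_left huv, mulSign_union_right hvw]
  ring

lemma contractCoeff_union_mul_wedgeCoeff_of_mem_left {u v : Finset (Fin n')} {j : Fin n'}
    (hju : j ∈ u) (hjv : j ∉ v) :
    contractCoeff F j (u ∪ v) * wedgeCoeff F u v =
      contractCoeff F j u * wedgeCoeff F (u.erase j) v := by
  have hdisj : Disjoint (u.erase j) v ↔ Disjoint u v := by
    conv_rhs => rw [← Finset.insert_erase hju]
    rw [Finset.disjoint_insert_left, and_iff_right hjv]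
  rw [contractCoeff, contractCoeff, if_pos (Finset.mem_union_left v hju), if_pos hju]
  simp only [wedgeCoeff, hdisj]
  split_ifs with h
  · rw [mulSign_erase_left (F := F) hju, Finset.filter_union,
      Finset.card_union_of_disjoint (Finset.disjoint_filter_filter h), pow_add]
    linear_combination (-1 : F) ^ (u.filter (· < j)).card * mulSign F (u.erase j) v *
      neg_one_pow_mul_self (F := F) ((v.filter (· < j)).card)
  · simp

lemma contractCoeff_union_mul_wedgeCoeff_of_mem_right {u v : Finset (Fin n')} {j : Fin n'}
    (hju : j ∉ u) (hjv : j ∈ v) :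
    contractCoeff F j (u ∪ v) * wedgeCoeff F u v =
      (-1) ^ u.card * (contractCoeff F j v * wedgeCoeff F u (v.erase j)) := by
  have hdisj : Disjoint u (v.erase j) ↔ Disjoint u v := by
    conv_rhs => rw [← Finset.insert_erase hjv]
    rw [Finset.disjoint_insert_right, and_iff_right hju]
  rw [contractCoeff, contractCoeff, if_pos (Finset.mem_union_right u hjv), if_pos hjv]
  simp only [wedgeCoeff, hdisj]
  split_ifs with h
  · rw [mulSign_erase_right (F := F) hjv, Finset.filter_union,
      Finset.card_union_of_disjoint (Finset.disjoint_filter_filter h),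
      ← card_filter_lt_add_card_filter_gt hju]
    ring
  · simp

lemma contractCoeff_mul_wedgeCoeff_of_mem_both {u v : Finset (Fin n')} {j : Fin n'}
    (hju : j ∈ u) (hjv : j ∈ v) :
    contractCoeff F j u * wedgeCoeff F (u.erase j) v +
      (-1) ^ u.card * (contractCoeff F j v * wedgeCoeff F u (v.erase j)) = 0 := by
  have hdisj : Disjoint u (v.erase j) ↔ Disjoint (u.erase j) v := by
    simp only [Finset.disjoint_left, Finset.mem_erase]
    exact ⟨fun h k ⟨hkj, hku⟩ hkv => h hku ⟨hkj, hkv⟩,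
      fun h k hku ⟨hkj, hkv⟩ => h ⟨hkj, hku⟩ hkv⟩
  rw [contractCoeff, contractCoeff, if_pos hju, if_pos hjv]
  simp only [wedgeCoeff, hdisj]
  split_ifs with h
  · rw [mulSign_erase_right (F := F) hjv, mulSign_erase_left (F := F) hju, filter_erase_lt_self,
      ← Finset.card_erase_add_one hju,
      ← card_filter_lt_add_card_filter_gt (Finset.notMem_erase j u), filter_erase_lt_self]
    linear_combination -(-1 : F) ^ (u.filter (· < j)).card *
      (-1) ^ ((u.erase j).filter (j < ·)).card * mulSign F (u.erase j) (v.erase j) *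
      neg_one_pow_mul_self (F := F) ((v.filter (· < j)).card)
  · simp

end Coefficients

section DividedPowers

lemma dpCoeff_comm (α β : Fin n → ℕ) : dpCoeff F α β = dpCoeff F β α :=
  Finset.prod_congr rfl fun i _ => by rw [add_comm (α i), Nat.choose_symm_add]

lemma dpCoeff_assoc (α β γ : Fin n → ℕ) :
    dpCoeff F α β * dpCoeff F (fun i => α i + β i) γ =
      dpCoeff F β γ * dpCoeff F α (fun i => β i + γ i) := by
  simp only [dpCoeff, ← Finset.prod_mul_distrib, ← Nat.cast_mul]
  refine Finset.prod_congr rfl fun i _ => congrArg Nat.cast ?_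
  have h := Nat.choose_mul (n := α i + β i + γ i) (Nat.le_add_right (α i) (β i))
  rw [Nat.add_sub_cancel_left, add_assoc, Nat.add_sub_cancel_left, ← add_assoc] at h
  rw [← add_assoc, mul_comm, h, mul_comm]

lemma dpCoeff_update_left (α β : Fin n → ℕ) (i : Fin n) (a : ℕ) :
    dpCoeff F (Function.update α i a) β =
      ((a + β i).choose a : F) *
        ∏ k ∈ Finset.univ.erase i, ((α k + β k).choose (α k) : F) := by
  rw [dpCoeff, ← Finset.mul_prod_erase _ _ (Finset.mem_univ i), Function.update_self]
  congr 1
  exact Finset.prod_congr rfl fun k hk => by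
    rw [Function.update_of_ne (Finset.ne_of_mem_erase hk)]

lemma dpCoeff_update_right (α β : Fin n → ℕ) (i : Fin n) (b : ℕ) :
    dpCoeff F α (Function.update β i b) =
      ((α i + b).choose (α i) : F) *
        ∏ k ∈ Finset.univ.erase i, ((α k + β k).choose (α k) : F) := by
  rw [dpCoeff, ← Finset.mul_prod_erase _ _ (Finset.mem_univ i), Function.update_self]
  congr 1
  exact Finset.prod_congr rfl fun k hk => by
    rw [Function.update_of_ne (Finset.ne_of_mem_erase hk)]

lemma dpCoeff_pascal {α β : Fin n → ℕ} {i : Fin n} (hα : 0 < α i) (hβ : 0 < β i) :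
    dpCoeff F α β = dpCoeff F (Function.update α i (α i - 1)) β +
      dpCoeff F α (Function.update β i (β i - 1)) := by
  conv_lhs => rw [← Function.update_eq_self i α]
  rw [dpCoeff_update_left, dpCoeff_update_left, dpCoeff_update_right, ← add_mul]
  obtain ⟨a, ha⟩ := Nat.exists_eq_add_one.2 hα
  obtain ⟨b, hb⟩ := Nat.exists_eq_add_one.2 hβ
  rw [ha, hb, Nat.add_sub_cancel, Nat.add_sub_cancel,
    show a + 1 + (b + 1) = a + (b + 1) + 1 by ring, Nat.choose_succ_succ, Nat.cast_add,
    add_right_comm a 1 b, add_assoc]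

end DividedPowers

section Product

lemma sMulB_eq (α β : Fin n → ℕ) (u v : Finset (Fin n')) :
    (sMulB (α, u) (β, v) : SAlg F n n') =
      (wedgeCoeff F u v * dpCoeff F α β) •
        Finsupp.single (fun i => α i + β i, u ∪ v) 1 := by
  rw [sMulB, wedgeCoeff, dpCoeff]
  split_ifs <;> simp

lemma sMul_eq_sum_support (f g : SAlg F n n') :
    sMul f g = ∑ q ∈ f.support, ∑ r ∈ g.support, (f q * g r) • sMulB q r :=
  rfl

lemma sMulB_comm (q r : SIdx n n') :
    (sMulB q r : SAlg F n n') = (-1 : F) ^ (q.2.card * r.2.card) • sMulB r q := by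
  obtain ⟨α, u⟩ := q
  obtain ⟨β, v⟩ := r
  rw [sMulB_eq, sMulB_eq, wedgeCoeff_comm, dpCoeff_comm, smul_smul, ← mul_assoc]
  congr 2
  exact Prod.ext (funext fun i => add_comm _ _) (Finset.union_comm _ _)

lemma sMul_comm {pf pg : ZMod 2} {f g : SAlg F n n'} (hf : IsHomog pf f) (hg : IsHomog pg g) :
    sMul f g = sgn F (pf * pg) • sMul g f := by
  rw [sMul_eq_sum_support, sMul_eq_sum_support g, Finset.sum_comm, Finset.smul_sum]
  refine Finset.sum_congr rfl fun r hr => ?_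
  rw [Finset.smul_sum]
  refine Finset.sum_congr rfl fun q hq => ?_
  rw [sMulB_comm, ← hf q hq, ← hg r hr, ← Nat.cast_mul, sgn_natCast, smul_smul, smul_smul,
    mul_comm (f q), mul_comm]

lemma sMulB_assoc (q r s : SIdx n n') :
    sMul (sMulB q r) (Finsupp.single s (1 : F)) = sMul (Finsupp.single q 1) (sMulB r s) := by
  obtain ⟨α, u⟩ := q
  obtain ⟨β, v⟩ := r
  obtain ⟨γ, w⟩ := s
  rw [sMulB_eq, sMulB_eq, smul_sMul, sMul_smul, sMul_single_single, sMul_single_single,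
    sMulB_eq, sMulB_eq]
  simp only [smul_smul, mul_one]
  congr 1
  · linear_combination
      wedgeCoeff F u v * dpCoeff_assoc (F := F) α β γ * wedgeCoeff F (u ∪ v) w +
        dpCoeff F β γ * dpCoeff F α (fun i => β i + γ i) * wedgeCoeff_assoc (F := F) u v w
  · exact congrArg₂ _
      (Prod.ext (funext fun i => add_assoc _ _ _) (Finset.union_assoc _ _ _)) rfl

lemma sMul_assoc (f g h : SAlg F n n') : sMul (sMul f g) h = sMul f (sMul g h) := by
  induction f using Finsupp.induction_linear with
  | zero => simp
  | add f₁ f₂ h₁ h₂ => rw [add_sMul, add_sMul, add_sMul, h₁, h₂]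
  | single q c =>
  induction g using Finsupp.induction_linear with
  | zero => simp
  | add g₁ g₂ h₁ h₂ => rw [sMul_add, add_sMul, h₁, h₂, add_sMul, sMul_add]
  | single r d =>
  induction h using Finsupp.induction_linear with
  | zero => simp
  | add h₁ h₂ e₁ e₂ => rw [sMul_add, sMul_add, sMul_add, e₁, e₂]
  | single s e =>
  rw [sMul_single_single, sMul_single_single, smul_sMul, sMul_smul, single_eq_smul_single_one q,
    single_eq_smul_single_one s, smul_sMul, sMul_smul, sMulB_assoc, smul_smul, smul_smul]
  congr 1
  ring

lemma sMul_left_comm {pf pg : ZMod 2} {f g : SAlg F n n'} (hf : IsHomog pf f)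
    (hg : IsHomog pg g) (h : SAlg F n n') :
    sMul f (sMul g h) = sgn F (pf * pg) • sMul g (sMul f h) := by
  rw [← sMul_assoc, ← sMul_assoc, sMul_comm hf hg, smul_sMul]

end Product

lemma IsHomog.de {c : ZMod 2} {f : SAlg F n n'} (hf : IsHomog c f) (i : Fin n) :
    IsHomog c (De i f) := by
  intro r hr
  obtain ⟨q, hq, hr⟩ := Finset.mem_biUnion.1 (Finsupp.support_sum hr)
  split_ifs at hr
  · rw [Finset.mem_singleton.1 (Finsupp.support_single_subset hr)]
    exact hf q hq
  · simp at hr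

lemma IsHomog.do {c : ZMod 2} {f : SAlg F n n'} (hf : IsHomog c f) (j : Fin n') :
    IsHomog (c + 1) (Do j f) := by
  intro r hr
  obtain ⟨q, hq, hr⟩ := Finset.mem_biUnion.1 (Finsupp.support_sum hr)
  split_ifs at hr with hj
  · rw [Finset.mem_singleton.1 (Finsupp.support_single_subset (Finsupp.support_smul hr)),
      ← hf q hq, ← Finset.card_erase_add_one hj, Nat.cast_succ, add_assoc,
      show (1 + 1 : ZMod 2) = 0 from rfl, add_zero]
  · simp at hr

section Leibniz

lemma dpCoeff_update_pred_left {α β : Fin n → ℕ} {i : Fin n} (hβ : β i = 0) :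
    dpCoeff F (Function.update α i (α i - 1)) β = dpCoeff F α β := by
  conv_rhs => rw [← Function.update_eq_self i α]
  rw [dpCoeff_update_left, dpCoeff_update_left, hβ, add_zero, add_zero, Nat.choose_self,
    Nat.choose_self]

lemma dpCoeff_update_pred_right {α β : Fin n → ℕ} {i : Fin n} (hα : α i = 0) :
    dpCoeff F α (Function.update β i (β i - 1)) = dpCoeff F α β := by
  conv_rhs => rw [← Function.update_eq_self i β]
  rw [dpCoeff_update_right, dpCoeff_update_right, hα, Nat.choose_zero_right,
    Nat.choose_zero_right]

lemma update_pred_add {α β : Fin n → ℕ} {i : Fin n} (h : 0 < α i) :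
    (fun k => Function.update α i (α i - 1) k + β k) =
      Function.update (fun k => α k + β k) i (α i + β i - 1) := by
  ext k
  rcases eq_or_ne k i with rfl | hk
  · simp only [Function.update_self]; omega
  · simp only [Function.update_of_ne hk]

lemma add_update_pred {α β : Fin n → ℕ} {i : Fin n} (h : 0 < β i) :
    (fun k => α k + Function.update β i (β i - 1) k) =
      Function.update (fun k => α k + β k) i (α i + β i - 1) := by
  ext k
  rcases eq_or_ne k i with rfl | hk
  · simp only [Function.update_self]; omega
  · simp only [Function.update_of_ne hk]

lemma De_sMulB (i : Fin n) (q r : SIdx n n') :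
    De i (sMulB q r : SAlg F n n') =
      sMul (De i (Finsupp.single q 1)) (Finsupp.single r 1) +
        sMul (Finsupp.single q 1) (De i (Finsupp.single r 1)) := by
  obtain ⟨α, u⟩ := q
  obtain ⟨β, v⟩ := r
  rw [sMulB_eq, De_smul, De_single, De_single, De_single]
  dsimp only
  by_cases hα : 0 < α i <;> by_cases hβ : 0 < β i
  · rw [if_pos (by omega), if_pos hα, if_pos hβ, sMul_single_single, sMul_single_single,
      sMulB_eq, sMulB_eq, update_pred_add hα, add_update_pred hβ, smul_smul, smul_smul,
      ← add_smul, dpCoeff_pascal hα hβ]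
    congr 1
    ring
  · rw [if_pos (by omega), if_pos hα, if_neg hβ, sMul_zero, add_zero, sMul_single_single,
      sMulB_eq, update_pred_add hα, dpCoeff_update_pred_left (by omega), one_mul, one_smul]
  · rw [if_pos (by omega), if_neg hα, if_pos hβ, zero_sMul, zero_add, sMul_single_single,
      sMulB_eq, add_update_pred hβ, dpCoeff_update_pred_right (by omega), one_mul, one_smul]
  · rw [if_neg (by omega), if_neg hα, if_neg hβ, zero_sMul, sMul_zero, add_zero, smul_zero]

lemma De_sMul (i : Fin n) (f g : SAlg F n n') :
    De i (sMul f g) = sMul (De i f) g + sMul f (De i g) := by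
  induction f using Finsupp.induction_linear with
  | zero => simp
  | add f₁ f₂ h₁ h₂ => rw [add_sMul, De_add, h₁, h₂, De_add, add_sMul, add_sMul]; abel
  | single q c =>
  induction g using Finsupp.induction_linear with
  | zero => simp
  | add g₁ g₂ h₁ h₂ => rw [sMul_add, De_add, h₁, h₂, De_add, sMul_add, sMul_add]; abel
  | single r d =>
  rw [sMul_single_single, De_smul, De_sMulB, single_eq_smul_single_one q c,
    single_eq_smul_single_one r d, De_smul, De_smul]
  simp only [smul_sMul, sMul_smul, smul_smul, smul_add, mul_comm c d]

lemma contractCoeff_of_notMem {j : Fin n'} {w : Finset (Fin n')} (h : j ∉ w) :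
    contractCoeff F j w = 0 :=
  if_neg h

lemma Do_single (j : Fin n') (α : Fin n → ℕ) (w : Finset (Fin n')) (c : F) :
    Do j (Finsupp.single (α, w) c) =
      (contractCoeff F j w * c) • Finsupp.single (α, w.erase j) 1 := by
  rw [Do, Finsupp.sum_single_index (by split <;> simp), contractCoeff]
  split_ifs <;> simp

lemma Do_sMulB (j : Fin n') (q r : SIdx n n') :
    Do j (sMulB q r : SAlg F n n') =
      sMul (Do j (Finsupp.single q 1)) (Finsupp.single r 1) +
        (-1 : F) ^ q.2.card • sMul (Finsupp.single q 1) (Do j (Finsupp.single r 1)) := by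
  obtain ⟨α, u⟩ := q
  obtain ⟨β, v⟩ := r
  rw [sMulB_eq, Do_smul, Do_single, Do_single, Do_single, smul_sMul, sMul_smul,
    sMul_single_single, sMul_single_single, sMulB_eq, sMulB_eq]
  simp only [smul_smul, mul_one]
  by_cases hju : j ∈ u <;> by_cases hjv : j ∈ v
  · -- `x^u x^v = 0`, while both Leibniz terms land on `x^(u ∪ v)` and cancel
    have hnd : ¬ Disjoint u v := Finset.not_disjoint_iff.2 ⟨j, hju, hjv⟩
    rw [wedgeCoeff, if_neg hnd, Finset.erase_union_of_mem hjv, Finset.union_erase_of_mem hju,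
      ← add_smul]
    simp only [zero_mul, zero_smul, one_mul]
    rw [eq_comm, smul_eq_zero]
    left
    linear_combination dpCoeff F α β * contractCoeff_mul_wedgeCoeff_of_mem_both (F := F) hju hjv
  · rw [contractCoeff_of_notMem hjv, Finset.erase_union_distrib, Finset.erase_eq_of_notMem hjv]
    simp only [zero_mul, mul_zero, zero_smul, add_zero]
    congr 1
    linear_combination
      dpCoeff F α β * contractCoeff_union_mul_wedgeCoeff_of_mem_left (F := F) hju hjv
  · rw [contractCoeff_of_notMem hju, Finset.erase_union_distrib, Finset.erase_eq_of_notMem hju]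
    simp only [zero_mul, zero_smul, zero_add]
    congr 1
    linear_combination
      dpCoeff F α β * contractCoeff_union_mul_wedgeCoeff_of_mem_right (F := F) hju hjv
  · rw [contractCoeff_of_notMem hju, contractCoeff_of_notMem hjv,
      contractCoeff_of_notMem fun h => (Finset.mem_union.1 h).elim hju hjv]
    simp

lemma Do_sMul_single (j : Fin n') (q : SIdx n n') (c : F) (g : SAlg F n n') :
    Do j (sMul (Finsupp.single q c) g) =
      sMul (Do j (Finsupp.single q c)) g +
        (-1 : F) ^ q.2.card • sMul (Finsupp.single q c) (Do j g) := by
  induction g using Finsupp.induction_linear with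
  | zero => simp
  | add g₁ g₂ h₁ h₂ =>
    rw [sMul_add, Do_add, h₁, h₂, Do_add, sMul_add, sMul_add, smul_add]; abel
  | single r d =>
    rw [sMul_single_single, Do_smul, Do_sMulB, single_eq_smul_single_one q c,
      single_eq_smul_single_one r d, Do_smul, Do_smul]
    simp only [smul_sMul, sMul_smul, smul_add, smul_comm _ ((-1 : F) ^ _), smul_smul, mul_comm c d]

lemma Do_sMul (j : Fin n') {pf : ZMod 2} {f : SAlg F n n'} (hf : IsHomog pf f) (g : SAlg F n n') :
    Do j (sMul f g) = sMul (Do j f) g + sgn F pf • sMul f (Do j g) := by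
  rw [← Finsupp.sum_single f]
  simp only [Finsupp.sum, sum_sMul, Do_sum, Finset.smul_sum, ← Finset.sum_add_distrib]
  refine Finset.sum_congr rfl fun q hq => ?_
  rw [Do_sMul_single, ← hf q hq, sgn_natCast]

end Leibniz

section Commutation

lemma De_De (i i' : Fin n) (f : SAlg F n n') : De i (De i' f) = De i' (De i f) := by
  rcases eq_or_ne i i' with rfl | hne
  · rfl
  induction f using Finsupp.induction_linear with
  | zero => simp
  | add f g h₁ h₂ => rw [De_add, De_add, h₁, h₂, De_add, De_add]
  | single q c =>
    obtain ⟨α, u⟩ := q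
    simp only [De_single]
    by_cases h₁ : 0 < α i' <;> by_cases h₂ : 0 < α i <;>
      simp [h₁, h₂, De_single, Function.update_of_ne hne, Function.update_of_ne hne.symm,
        Function.update_comm hne]

lemma De_Do (i : Fin n) (j : Fin n') (f : SAlg F n n') : De i (Do j f) = Do j (De i f) := by
  induction f using Finsupp.induction_linear with
  | zero => simp
  | add f g h₁ h₂ => rw [Do_add, De_add, h₁, h₂, De_add, Do_add]
  | single q c =>
    obtain ⟨α, u⟩ := q
    rw [Do_single, De_smul, De_single, De_single]
    split_ifs <;> simp [Do_single, *]

lemma contractCoeff_erase_mul (j j' : Fin n') (w : Finset (Fin n')) :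
    contractCoeff F j (w.erase j') * contractCoeff F j' w =
      -(contractCoeff F j' (w.erase j) * contractCoeff F j w) := by
  rcases eq_or_ne j j' with rfl | hne
  · simp [contractCoeff]
  by_cases hj : j ∈ w
  · by_cases hj' : j' ∈ w
    · have hcard {a b : Fin n'} (ha : a ∈ w) (hab : a < b) :
          ((w.erase a).filter (· < b)).card + 1 = (w.filter (· < b)).card := by
        rw [Finset.filter_erase, Finset.card_erase_add_one (Finset.mem_filter.2 ⟨ha, hab⟩)]
      have hsame {a b : Fin n'} (hab : a < b) :
          (w.erase b).filter (· < a) = w.filter (· < a) := by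
        rw [Finset.filter_erase, Finset.erase_eq_of_notMem (by simp [hab.not_gt])]
      rw [contractCoeff, contractCoeff, contractCoeff, contractCoeff, if_pos hj, if_pos hj',
        if_pos (Finset.mem_erase.2 ⟨hne, hj⟩), if_pos (Finset.mem_erase.2 ⟨hne.symm, hj'⟩)]
      rcases hne.lt_or_gt with h | h
      · rw [hsame h, ← hcard hj h, pow_succ]; ring
      · rw [hsame h, ← hcard hj' h, pow_succ]; ring
    · simp [contractCoeff, hj']
  · simp [contractCoeff, hj]

lemma Do_Do (j j' : Fin n') (f : SAlg F n n') : Do j (Do j' f) = -Do j' (Do j f) := by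
  induction f using Finsupp.induction_linear with
  | zero => simp
  | add f g h₁ h₂ => rw [Do_add, Do_add, h₁, h₂, Do_add, Do_add, neg_add]
  | single q c =>
    obtain ⟨α, u⟩ := q
    rw [Do_single, Do_single, Do_smul, Do_smul, Do_single, Do_single, smul_smul,
      smul_smul, Finset.erase_right_comm, ← neg_smul]
    congr 1
    linear_combination c * contractCoeff_erase_mul (F := F) j j' u

end Commutation

/-- `(false, i)` indexes the even derivative `∂_i` and `(true, i)` the odd one `∂_{n+i}`;
`dual` is the involution `k ↦ k'` of the definition of `T_H`. -/
abbrev DIdx (n : ℕ) : Type := Bool × Fin n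

namespace DIdx

def parity (k : DIdx n) : ZMod 2 := if k.1 then 1 else 0

def dual (k : DIdx n) : DIdx n := (!k.1, k.2)

lemma dual_involutive : Function.Involutive (dual : DIdx n → DIdx n) := fun k => by
  simp [dual]

lemma parity_dual (k : DIdx n) : k.dual.parity = k.parity + 1 := by
  rcases k with ⟨_ | _, i⟩ <;> rfl

lemma sum_dual {M : Type*} [AddCommMonoid M] (f : DIdx n → M) :
    ∑ k : DIdx n, f k.dual = ∑ k, f k :=
  Equiv.sum_comp (dual_involutive.toPerm _) f

end DIdx

open DIdx

def Der (k : DIdx n) (f : SAlg F n n) : SAlg F n n := if k.1 then Do k.2 f else De k.2 f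

lemma Der_smul (k : DIdx n) (c : F) (f : SAlg F n n) : Der k (c • f) = c • Der k f := by
  rcases k with ⟨_ | _, i⟩
  exacts [De_smul i c f, Do_smul i c f]

lemma Der_sum {κ : Type*} (k : DIdx n) (s : Finset κ) (f : κ → SAlg F n n) :
    Der k (∑ j ∈ s, f j) = ∑ j ∈ s, Der k (f j) := by
  rcases k with ⟨_ | _, i⟩
  exacts [De_sum i s f, Do_sum i s f]

lemma IsHomog.der {c : ZMod 2} {f : SAlg F n n} (hf : IsHomog c f) (k : DIdx n) :
    IsHomog (c + k.parity) (Der k f) := by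
  rcases k with ⟨_ | _, i⟩
  · simpa [parity, Der] using hf.de i
  · simpa [parity, Der] using hf.do i

lemma Der_sMul {pf : ZMod 2} (k : DIdx n) {f : SAlg F n n} (hf : IsHomog pf f) (g : SAlg F n n) :
    Der k (sMul f g) = sMul (Der k f) g + sgn F (k.parity * pf) • sMul f (Der k g) := by
  rcases k with ⟨_ | _, i⟩
  · simp [Der, parity, De_sMul]
  · simpa [Der, parity] using Do_sMul i hf g

lemma Der_Der (k l : DIdx n) (f : SAlg F n n) :
    Der k (Der l f) = sgn F (k.parity * l.parity) • Der l (Der k f) := by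
  rcases k with ⟨_ | _, i⟩ <;> rcases l with ⟨_ | _, i'⟩
  · simp [Der, parity, De_De i i' f]
  · simp [Der, parity, De_Do i i' f]
  · simp [Der, parity, De_Do i' i f]
  · simp [Der, parity, Do_Do i i' f]

lemma TH_eq_sum (pa : ZMod 2) (a b : SAlg F n n) :
    TH pa a b = ∑ k : DIdx n, sgn F (k.parity * pa) • sMul (Der k a) (Der k.dual b) := by
  rw [Fintype.sum_prod_type, Fintype.sum_bool, TH, add_comm, Finset.smul_sum]
  simp [Der, parity, dual]

section Composition

variable (pa pb : ZMod 2) (a b x : SAlg F n n)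

def firstOrderPart : SAlg F n n :=
  ∑ k : DIdx n, ∑ l : DIdx n, (sgn F (k.parity * pa) * sgn F (l.parity * pb)) •
    sMul (Der k a) (sMul (Der k.dual (Der l b)) (Der l.dual x))

def secondOrderPart : SAlg F n n :=
  ∑ k : DIdx n, ∑ l : DIdx n,
    (sgn F (k.parity * pa) * sgn F (l.parity * pb) * sgn F ((k.parity + 1) * (pb + l.parity))) •
      sMul (Der k a) (sMul (Der l b) (Der k.dual (Der l.dual x)))

variable {pa pb a b}

lemma TH_TH (hb : IsHomog pb b) :
    TH pa a (TH pb b x) = firstOrderPart pa pb a b x + secondOrderPart pa pb a b x := by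
  rw [TH_eq_sum pb b x, TH_eq_sum pa a, firstOrderPart, secondOrderPart, ← Finset.sum_add_distrib]
  refine Finset.sum_congr rfl fun k _ => ?_
  rw [Der_sum, sMul_sum, Finset.smul_sum, ← Finset.sum_add_distrib]
  refine Finset.sum_congr rfl fun l _ => ?_
  rw [Der_smul, Der_sMul k.dual (hb.der l), parity_dual, sMul_smul, sMul_add, sMul_smul]
  simp only [smul_add, smul_smul, mul_assoc]

lemma secondOrderPart_comm (ha : IsHomog pa a) (hb : IsHomog pb b) :
    secondOrderPart pa pb a b x = sgn F ((pa + 1) * (pb + 1)) • secondOrderPart pb pa b a x := by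
  rw [secondOrderPart, secondOrderPart, Finset.sum_comm, Finset.smul_sum]
  refine Finset.sum_congr rfl fun l _ => ?_
  rw [Finset.smul_sum]
  refine Finset.sum_congr rfl fun k _ => ?_
  rw [sMul_left_comm (ha.der k) (hb.der l), Der_Der k.dual, parity_dual, parity_dual]
  simp only [sMul_smul, smul_smul, ← sgn_add]
  congr 2
  generalize k.parity = u
  generalize l.parity = v
  clear ha hb
  revert pa pb u v
  decide

lemma neg_smul_firstOrderPart_eq_sum (ha : IsHomog pa a) (hb : IsHomog pb b) :
    -sgn F ((pa + 1) * (pb + 1)) • firstOrderPart pb pa b a x =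
      ∑ k : DIdx n, ∑ l : DIdx n, (sgn F (k.parity * (pa + pb + 1)) * sgn F (l.parity * pa)) •
        sMul (sMul (Der k (Der l a)) (Der l.dual b)) (Der k.dual x) := by
  rw [firstOrderPart, ← sum_dual, Finset.sum_comm, Finset.smul_sum]
  refine Finset.sum_congr rfl fun k _ => ?_
  rw [Finset.smul_sum]
  refine Finset.sum_congr rfl fun l _ => ?_
  rw [dual_involutive l, sMul_assoc, sMul_left_comm ((ha.der l).der k) (hb.der l.dual),
    Der_Der k, parity_dual]
  simp only [sMul_smul, smul_sMul, smul_smul, ← sgn_add, ← sgn_add_one]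
  congr 2
  symm
  generalize k.parity = u
  generalize l.parity = v
  clear ha hb
  revert pa pb u v
  decide

lemma firstOrderPart_eq_sum :
    firstOrderPart pa pb a b x =
      ∑ k : DIdx n, ∑ l : DIdx n, (sgn F (k.parity * (pa + pb + 1)) * sgn F (l.parity * pa) *
          sgn F (k.parity * (pa + l.parity))) •
        sMul (sMul (Der l a) (Der k (Der l.dual b))) (Der k.dual x) := by
  rw [Finset.sum_comm, firstOrderPart]
  refine Finset.sum_congr rfl fun l _ => Finset.sum_congr rfl fun k _ => ?_
  rw [sMul_assoc, Der_Der k, parity_dual]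
  simp only [sMul_smul, smul_sMul, smul_smul, ← sgn_add]
  congr 2
  symm
  generalize k.parity = u
  generalize l.parity = v
  revert pa pb u v
  decide

lemma TH_TH_apply (ha : IsHomog pa a) (hb : IsHomog pb b) :
    TH (pa + pb + 1) (TH pa a b) x =
      firstOrderPart pa pb a b x - sgn F ((pa + 1) * (pb + 1)) • firstOrderPart pb pa b a x := by
  rw [sub_eq_add_neg, ← neg_smul, neg_smul_firstOrderPart_eq_sum x ha hb, firstOrderPart_eq_sum,
    TH_eq_sum pa a b, TH_eq_sum, ← Finset.sum_add_distrib]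
  refine Finset.sum_congr rfl fun k _ => ?_
  rw [Der_sum, sum_sMul, Finset.smul_sum, ← Finset.sum_add_distrib]
  refine Finset.sum_congr rfl fun l _ => ?_
  rw [Der_smul, Der_sMul k (ha.der l), smul_sMul, add_sMul, smul_sMul]
  simp only [smul_add, smul_smul, mul_assoc]
  exact add_comm _ _

end Composition

theorem stmt8_general (pa pb : ZMod 2) (a b : SAlg F n n)
    (ha : IsHomog pa a) (hb : IsHomog pb b) :
    ∀ x : SAlg F n n,
      TH pa a (TH pb b x) - sgn F ((pa + 1) * (pb + 1)) • TH pb b (TH pa a x)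
        = TH (pa + pb + 1) (TH pa a b) x := by
  intro x
  rw [TH_TH x hb, TH_TH x ha, secondOrderPart_comm x ha hb, TH_TH_apply x ha hb, smul_add]
  abel

/-- For all homogeneous `a, b ∈ 𝒪(n, n; t̲)`:
`[T_H(a), T_H(b)] = T_H(T_H(a)(b))`, where the bracket is the supercommutator of
superderivations (`T_H(a)` has parity `p(a) + 1`). -/
theorem stmt8 (p : ℕ) (hp : p.Prime) (hp3 : 3 < p) [CharP F p]
    (t : Fin n → ℕ) (ht : ∀ i, 0 < t i)
    (pa pb : ZMod 2) (a b : SAlg F n n)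
    (ha : IsHomog pa a) (hb : IsHomog pb b)
    (hba : Bounded p t a) (hbb : Bounded p t b) :
    ∀ x : SAlg F n n,
      TH pa a (TH pb b x) - sgn F ((pa + 1) * (pb + 1)) • TH pb b (TH pa a x)
        = TH (pa + pb + 1) (TH pa a b) x :=
  stmt8_general pa pb a b ha hb

end
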